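/- arXiv:2411.15071 — 2 statements merged into one kernel-verified Lean document; each statement's English description precedes it below -/
import Mathlib

section
/- Let F be a field and let A₁(F) be the ℚ-vector space spanned by symbols ((x₀,x₁)) for x₀,x₁ ∈ F, modulo the relations ((x₀,x₁)) = ((x₁,x₀)), ((x₀+b,x₁+b)) = ((x₀,x₁)) for all b ∈ F, ((0,x)) + ((0,y)) = ((0,xy)) for x,y ∈ F^×, ((0,0)) = 0, and ((1,0)) = 0. Then the map u : A₁(F) → ℚ ⊗_ℤ F^× sending ((x₀,x₁)) with x₀ ≠ x₁ to 1 ⊗ (x₁ - x₀) and ((x,x)) to 0 is a well-defined ℚ-linear isomorphism. -/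
open TensorProduct

variable (F : Type*) [Field F]

/-- The relations defining the weight-one space `A₁(F)`. -/
noncomputable def A1rel : Submodule ℚ ((F × F) →₀ ℚ) :=
  Submodule.span ℚ
    ({ r | ∃ x₀ x₁ : F, r = Finsupp.single (x₀, x₁) 1 - Finsupp.single (x₁, x₀) 1 } ∪
     { r | ∃ x₀ x₁ b : F, r = Finsupp.single (x₀ + b, x₁ + b) 1 - Finsupp.single (x₀, x₁) 1 } ∪
     { r | ∃ x y : F, x ≠ 0 ∧ y ≠ 0 ∧
        r = Finsupp.single ((0 : F), x) 1 + Finsupp.single ((0 : F), y) 1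
            - Finsupp.single ((0 : F), x * y) 1 } ∪
     { r | r = Finsupp.single ((0 : F), (0 : F)) 1 } ∪
     { r | r = Finsupp.single ((1 : F), (0 : F)) 1 })

/-- `A₁(F)`: the free ℚ-vector space on pairs modulo the relations. -/
noncomputable abbrev A1 := ((F × F) →₀ ℚ) ⧸ A1rel F


open Classical in
noncomputable def ell (a : F) : ℚ ⊗[ℤ] (Additive Fˣ) :=
  if h : a ≠ 0 then (1 : ℚ) ⊗ₜ[ℤ] Additive.ofMul (Units.mk0 a h) else 0

variable {F}

lemma tmul_torsion (t : Additive Fˣ) (ht : t + t = 0) : (1 : ℚ) ⊗ₜ[ℤ] t = 0 := by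
  have h2 : (2:ℚ) • ((1:ℚ) ⊗ₜ[ℤ] t) = 0 := by
    rw [smul_tmul']
    have h3 : (2:ℚ) • (1:ℚ) = (2:ℤ) • (1:ℚ) := by norm_num
    have h4 : (2:ℤ) • t = 0 := by rw [two_zsmul]; exact ht
    rw [h3, TensorProduct.smul_tmul, h4, TensorProduct.tmul_zero]
  have := congrArg (fun x => (2⁻¹ : ℚ) • x) h2
  simpa [smul_smul] using this

lemma ell_zero : ell F 0 = 0 := by simp [ell]

lemma ell_one : ell F 1 = 0 := by
  classical
  rw [ell, dif_pos one_ne_zero]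
  have : Units.mk0 (1:F) one_ne_zero = 1 := Units.ext rfl
  rw [this]
  simp

lemma ell_mul {a b : F} (ha : a ≠ 0) (hb : b ≠ 0) : ell F (a * b) = ell F a + ell F b := by
  classical
  rw [ell, ell, ell, dif_pos (mul_ne_zero ha hb), dif_pos ha, dif_pos hb]
  have : Units.mk0 (a*b) (mul_ne_zero ha hb) = Units.mk0 a ha * Units.mk0 b hb := Units.ext rfl
  rw [this, ofMul_mul, TensorProduct.tmul_add]

lemma ell_neg_one : ell F (-1) = 0 := by
  classical
  rw [ell, dif_pos (by norm_num : (-1:F) ≠ 0)]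
  apply tmul_torsion
  rw [← ofMul_mul]
  have : Units.mk0 (-1:F) (by norm_num) * Units.mk0 (-1:F) (by norm_num) = 1 :=
    Units.ext (by simp)
  rw [this]; simp

lemma ell_neg (a : F) : ell F (-a) = ell F a := by
  by_cases h : a = 0
  · simp [h]
  · rw [show -a = (-1) * a by ring, ell_mul (by norm_num) h, ell_neg_one, zero_add]

variable (F)

noncomputable def phi : ((F × F) →₀ ℚ) →ₗ[ℚ] ℚ ⊗[ℤ] (Additive Fˣ) :=
  Finsupp.lift _ ℚ _ (fun p => ell F (p.2 - p.1))

lemma phi_single (p : F × F) (c : ℚ) : phi F (Finsupp.single p c) = c • ell F (p.2 - p.1) := by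
  simp [phi]

lemma rel_le_ker : A1rel F ≤ LinearMap.ker (phi F) := by
  rw [A1rel, Submodule.span_le]
  rintro r hr
  simp only [Set.mem_union, Set.mem_setOf_eq] at hr
  rcases hr with ((((⟨x₀, x₁, rfl⟩ | ⟨x₀, x₁, b, rfl⟩) | ⟨x, y, hx, hy, rfl⟩) | rfl) | rfl) <;>
    simp only [SetLike.mem_coe, LinearMap.mem_ker, map_sub, map_add, phi_single, one_smul]
  · rw [show x₀ - x₁ = -(x₁ - x₀) by ring, ell_neg, sub_self]
  · rw [show x₁ + b - (x₀ + b) = x₁ - x₀ by ring, sub_self]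
  · rw [sub_zero, sub_zero, sub_zero, ell_mul hx hy, sub_self]
  · rw [sub_zero, ell_zero]
  · rw [zero_sub, ell_neg_one]

noncomputable def u0 : A1 F →ₗ[ℚ] ℚ ⊗[ℤ] (Additive Fˣ) :=
  (A1rel F).liftQ (phi F) (rel_le_ker F)

lemma single01_mem : Finsupp.single ((0:F), (1:F)) 1 ∈ A1rel F := by
  apply Submodule.subset_span
  left; left; right
  refine ⟨1, 1, one_ne_zero, one_ne_zero, ?_⟩
  rw [mul_one]; abel

noncomputable def ginv : Additive Fˣ →+ A1 F where
  toFun x := Submodule.Quotient.mk (Finsupp.single ((0:F), ((Additive.toMul x : Fˣ) : F)) 1)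
  map_zero' := by
    have h : ((Additive.toMul (0 : Additive Fˣ) : Fˣ) : F) = 1 := rfl
    simp only [h]
    exact (Submodule.Quotient.mk_eq_zero _).mpr (single01_mem F)
  map_add' x y := by
    simp only [toMul_add, Units.val_mul]
    rw [← Submodule.Quotient.mk_add, Submodule.Quotient.eq]
    have h : Finsupp.single ((0:F), ((Additive.toMul x : Fˣ) : F)) 1 +
        Finsupp.single ((0:F), ((Additive.toMul y : Fˣ) : F)) 1 -
        Finsupp.single ((0:F), ((Additive.toMul x : Fˣ) : F) * ((Additive.toMul y : Fˣ) : F)) 1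
        ∈ A1rel F := by
      apply Submodule.subset_span
      left; left; right
      exact ⟨_, _, (Additive.toMul x).ne_zero, (Additive.toMul y).ne_zero, rfl⟩
    have h2 := Submodule.neg_mem _ h
    convert h2 using 1
    abel

noncomputable def inv0 : ℚ ⊗[ℤ] (Additive Fˣ) →ₗ[ℚ] A1 F :=
  LinearMap.liftBaseChange ℚ (ginv F).toIntLinearMap

lemma single_xx_mem (x : F) : Finsupp.single ((x:F), x) 1 ∈ A1rel F := by
  have h1 : Finsupp.single ((0:F)+x, (0:F)+x) 1 - Finsupp.single ((0:F),(0:F)) 1 ∈ A1rel F := by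
    apply Submodule.subset_span; left; left; left; right; exact ⟨0, 0, x, rfl⟩
  have h2 : Finsupp.single ((0:F),(0:F)) 1 ∈ A1rel F := by
    apply Submodule.subset_span; left; right; rfl
  have := Submodule.add_mem _ h1 h2
  simpa using this

lemma key : ∀ p : F × F, inv0 F (u0 F (Submodule.Quotient.mk (Finsupp.single p 1))) =
    Submodule.Quotient.mk (Finsupp.single p 1) := by
  rintro ⟨x₀, x₁⟩
  have hu : u0 F (Submodule.Quotient.mk (Finsupp.single (x₀, x₁) 1)) = ell F (x₁ - x₀) := by
    show (A1rel F).liftQ (phi F) (rel_le_ker F) (Submodule.Quotient.mk _) = _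
    rw [Submodule.liftQ_apply, phi_single, one_smul]
  rw [hu]
  by_cases h : x₁ - x₀ = 0
  · rw [h, ell_zero, map_zero]
    symm
    rw [Submodule.Quotient.mk_eq_zero]
    have : x₁ = x₀ := sub_eq_zero.mp h
    rw [this]
    exact single_xx_mem F x₀
  · rw [ell, dif_pos h]
    rw [inv0, LinearMap.liftBaseChange_tmul, one_smul]
    show (ginv F) (Additive.ofMul (Units.mk0 (x₁ - x₀) h)) = _
    rw [ginv]
    simp only [AddMonoidHom.coe_mk, ZeroHom.coe_mk, toMul_ofMul, Units.val_mk0]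
    rw [Submodule.Quotient.eq]
    have : Finsupp.single ((0:F)+x₀, (x₁-x₀)+x₀) 1 - Finsupp.single ((0:F), x₁-x₀) 1 ∈ A1rel F := by
      apply Submodule.subset_span; left; left; left; right; exact ⟨0, x₁-x₀, x₀, rfl⟩
    have e : Finsupp.single ((0:F), x₁ - x₀) (1:ℚ) - Finsupp.single (x₀, x₁) 1 =
        -(Finsupp.single ((0:F)+x₀, (x₁-x₀)+x₀) 1 - Finsupp.single ((0:F), x₁-x₀) 1) := by
      rw [zero_add, sub_add_cancel]; abel
    rw [e]
    exact Submodule.neg_mem _ this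

theorem stmt0 :
    ∃ u : A1 F ≃ₗ[ℚ] ℚ ⊗[ℤ] (Additive Fˣ),
      (∀ x₀ x₁ : F, ∀ h : x₁ - x₀ ≠ 0,
        u (Submodule.Quotient.mk (Finsupp.single (x₀, x₁) 1)) =
          (1 : ℚ) ⊗ₜ[ℤ] Additive.ofMul (Units.mk0 (x₁ - x₀) h)) ∧
      (∀ x : F, u (Submodule.Quotient.mk (Finsupp.single (x, x) 1)) = 0) := by
  have hright : (u0 F) ∘ₗ (inv0 F) = LinearMap.id := by
    ext m
    classical
    simp only [TensorProduct.AlgebraTensorModule.curry_apply, TensorProduct.curry_apply,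
      LinearMap.coe_restrictScalars, LinearMap.coe_comp, Function.comp_apply,
      LinearMap.id_coe, id_eq]
    rw [inv0, LinearMap.liftBaseChange_tmul, one_smul]
    show u0 F (Submodule.Quotient.mk
      (Finsupp.single ((0:F), ((Additive.toMul m : Fˣ) : F)) 1)) = _
    show (A1rel F).liftQ (phi F) (rel_le_ker F) (Submodule.Quotient.mk _) = _
    rw [Submodule.liftQ_apply, phi_single, one_smul]
    rw [show ((Additive.toMul m : Fˣ) : F) - 0 = ((Additive.toMul m : Fˣ) : F) from sub_zero _]
    rw [ell, dif_pos (Additive.toMul m).ne_zero]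
    have h : Units.mk0 ((Additive.toMul m : Fˣ) : F) (Additive.toMul m).ne_zero
        = Additive.toMul m := Units.ext rfl
    rw [h, ofMul_toMul]
  have hleft : (inv0 F) ∘ₗ (u0 F) = LinearMap.id := by
    apply Submodule.linearMap_qext
    apply Finsupp.lhom_ext
    intro p c
    have : (Finsupp.single p c : (F × F) →₀ ℚ) = c • Finsupp.single p 1 := by
      rw [Finsupp.smul_single, smul_eq_mul, mul_one]
    simp only [LinearMap.coe_comp, Function.comp_apply, this, map_smul]
    congr 1
    exact key F p
  refine ⟨LinearEquiv.ofLinear (u0 F) (inv0 F) hright hleft, ?_, ?_⟩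
  · intro x₀ x₁ h
    show u0 F _ = _
    show (A1rel F).liftQ (phi F) (rel_le_ker F) (Submodule.Quotient.mk _) = _
    classical
    rw [Submodule.liftQ_apply, phi_single, one_smul, ell, dif_pos h]
  · intro x
    show u0 F _ = _
    show (A1rel F).liftQ (phi F) (rel_le_ker F) (Submodule.Quotient.mk _) = _
    rw [Submodule.liftQ_apply, phi_single, one_smul]
    simp [ell_zero]
end

section
/- Fix n ≥ 1. For any function cor from (n+1)-tuples over a set X to an abelian group, define δcor(x₀,…,x_n) = ∑_{j=0}^{n} ∑_{i=1}^{n-1} cor(x_j, x_{j+1},…, x_{j+i}) ∧ cor(x_j, x_{j+i+1},…, x_{j+n}) (indices mod n+1), valued in the exterior square of the group (over ℚ). Suppose cor is cyclically invariant (cor(x₀,…,x_n) = cor(x₁,…,x_n,x₀)) and satisfies the reversal symmetry cor(y₀,…,y_m) = (−1)^{m+1} cor(y_m,…,y₀) for all tuples of length m+1 ≤ n. Then δ applied to the reversed tuple satisfies δcor(x_n, x_{n-1}, …, x₀) = (−1)^{n+1} δcor(x₀, x₁, …, x_n). -/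
variable {X L : Type*}

/-- The wedge `a ∧ b` in the exterior square, computed inside the exterior algebra. -/
noncomputable def wedge [AddCommGroup L] [Module ℚ L] (a b : L) : ExteriorAlgebra ℚ L :=
  ExteriorAlgebra.ι ℚ a * ExteriorAlgebra.ι ℚ b

/-- The subtuple `(x_j, x_{j+1}, …, x_{j+i})`, indices mod `n+1`. -/
def tup1 (n : ℕ) (x : ℕ → X) (j i : ℕ) : List X :=
  (List.range (i + 1)).map (fun t => x ((j + t) % (n + 1)))

/-- The subtuple `(x_j, x_{j+i+1}, …, x_{j+n})`, indices mod `n+1`. -/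
def tup2 (n : ℕ) (x : ℕ → X) (j i : ℕ) : List X :=
  x (j % (n + 1)) :: (List.range (n - i)).map (fun t => x ((j + i + 1 + t) % (n + 1)))

/-- The cobracket formula
`δcor(x₀,…,x_n) = ∑_{j=0}^{n} ∑_{i=1}^{n-1} cor(x_j,…,x_{j+i}) ∧ cor(x_j,x_{j+i+1},…,x_{j+n})`. -/
noncomputable def dcor [AddCommGroup L] [Module ℚ L] (cor : List X → L) (n : ℕ) (x : ℕ → X) :
    ExteriorAlgebra ℚ L :=
  ∑ j ∈ Finset.range (n + 1), ∑ i ∈ Finset.Icc 1 (n - 1),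
    wedge (cor (tup1 n x j i)) (cor (tup2 n x j i))

lemma keymod (n a b : ℕ) (hab : a + b = 2*n + 1) (ha : a ≤ 2*n) :
    n - a % (n+1) = b % (n+1) := by
  rcases le_or_gt a n with h | h
  · rw [Nat.mod_eq_of_lt (by omega), Nat.mod_eq_sub_mod (by omega),
      Nat.mod_eq_of_lt (by omega)]
    omega
  · rw [Nat.mod_eq_sub_mod (by omega), Nat.mod_eq_of_lt (by omega),
      Nat.mod_eq_of_lt (by omega)]
    omega

lemma tup1_length (n : ℕ) (x : ℕ → X) (j i : ℕ) : (tup1 n x j i).length = i + 1 := by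
  simp [tup1]

lemma wedge_smul_smul [AddCommGroup L] [Module ℚ L] (c d : ℚ) (a b : L) :
    wedge (c • a) (d • b) = (c * d) • wedge a b := by
  simp [wedge, map_smul, smul_mul_assoc, mul_smul_comm, smul_smul, mul_comm]

lemma wedge_swap [AddCommGroup L] [Module ℚ L] (a b : L) : wedge a b = - wedge b a :=
  eq_neg_of_add_eq_zero_left (ExteriorAlgebra.ι_add_mul_swap a b)

lemma L1 (n j i : ℕ) (x : ℕ → X) (hj : j ≤ n) (hi : i ≤ n) :
    tup1 n (fun t => x (n - t)) j i = (tup1 n x (n - j + (n - i) + 1) i).reverse := by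
  apply List.ext_getElem
  · simp [tup1]
  intro t h1 h2
  simp only [tup1, List.getElem_reverse, List.length_map, List.length_range,
    List.getElem_map, List.getElem_range]
  have h := keymod n (j + t) (n - j + (n - i) + 1 + (i + 1 - 1 - t)) (by
    simp [tup1] at h1; omega) (by simp [tup1] at h1; omega)
  congr 1

lemma L2list (n j i : ℕ) (x : ℕ → X) (hn : 1 ≤ n) (hj : j ≤ n) (hi1 : 1 ≤ i) (hi2 : i ≤ n - 1) :
    (List.range (n - i)).map (fun t => x (n - (j + i + 1 + t) % (n + 1))) ++ [x (n - j)]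
      = (tup1 n x (n - j) (n - i)).reverse := by
  apply List.ext_getElem
  · simp [tup1]
  intro s h1 h2
  simp only [tup1, List.getElem_reverse, List.length_map, List.length_range,
    List.getElem_map, List.getElem_range]
  rcases lt_or_ge s (n - i) with hs | hs
  · rw [List.getElem_append_left (by simpa using hs)]
    simp only [List.getElem_map, List.getElem_range]
    have h := keymod n (j + i + 1 + s) (n - j + (n - i + 1 - 1 - s)) (by omega) (by omega)
    congr 1
  · rw [List.getElem_append_right (by simpa using hs)]
    simp only [List.length_map, List.length_range, List.getElem_singleton]
    congr 1
    rw [Nat.mod_eq_of_lt (by omega)]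
    simp at h1
    omega

lemma L3list (n j i : ℕ) (x : ℕ → X) (hn : 1 ≤ n) (hj : j ≤ n) (hi1 : 1 ≤ i) (hi2 : i ≤ n - 1) :
    (List.range (n - (n - i))).map (fun t => x ((n - j + (n - i) + 1 + t) % (n + 1)))
        ++ [x ((n - j) % (n + 1))]
      = tup1 n x (n - j + (n - i) + 1) i := by
  apply List.ext_getElem
  · simp [tup1]; omega
  intro s h1 h2
  simp only [tup1, List.getElem_map, List.getElem_range]
  rcases lt_or_ge s (n - (n - i)) with hs | hs
  · rw [List.getElem_append_left (by simpa using hs)]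
    simp only [List.getElem_map, List.getElem_range]
  · rw [List.getElem_append_right (by simpa using hs)]
    simp only [List.length_map, List.length_range, List.getElem_singleton]
    congr 1
    have hse : s = i := by simp [tup1] at h2; omega
    have : n - j + (n - i) + 1 + s = (n - j) + (n + 1) := by omega
    rw [this, Nat.add_mod_right]

lemma termwise [AddCommGroup L] [Module ℚ L] (n j i : ℕ) (hn : 1 ≤ n) (hj : j ≤ n)
    (hi1 : 1 ≤ i) (hi2 : i ≤ n - 1) (cor : List X → L)
    (hcyc : ∀ (a : X) (l : List X), cor (a :: l) = cor (l ++ [a]))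
    (hrev : ∀ l : List X, 1 ≤ l.length → l.length ≤ n →
      cor l.reverse = ((-1 : ℚ)) ^ l.length • cor l)
    (x : ℕ → X) :
    wedge (cor (tup1 n (fun t => x (n - t)) j i)) (cor (tup2 n (fun t => x (n - t)) j i))
      = ((-1 : ℚ)) ^ (n + 1) •
        wedge (cor (tup1 n x (n - j) (n - i))) (cor (tup2 n x (n - j) (n - i))) := by
  have hi : i ≤ n := by omega
  have hA : cor (tup1 n (fun t => x (n - t)) j i)
      = ((-1 : ℚ)) ^ (i + 1) • cor (tup1 n x (n - j + (n - i) + 1) i) := by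
    rw [L1 n j i x hj hi,
      hrev (tup1 n x (n - j + (n - i) + 1) i) (by simp [tup1]) (by simp [tup1]; omega),
      tup1_length]
  have hB : cor (tup2 n (fun t => x (n - t)) j i)
      = ((-1 : ℚ)) ^ (n - i + 1) • cor (tup1 n x (n - j) (n - i)) := by
    have h0 : tup2 n (fun t => x (n - t)) j i
        = x (n - j) :: (List.range (n - i)).map (fun t => x (n - (j + i + 1 + t) % (n + 1))) := by
      simp only [tup2]
      rw [Nat.mod_eq_of_lt (show j < n + 1 by omega)]
    rw [h0, hcyc, L2list n j i x hn hj hi1 hi2,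
      hrev (tup1 n x (n - j) (n - i)) (by simp [tup1]) (by simp [tup1]; omega),
      tup1_length]
  have hC : cor (tup2 n x (n - j) (n - i)) = cor (tup1 n x (n - j + (n - i) + 1) i) := by
    simp only [tup2]
    rw [hcyc, L3list n j i x hn hj hi1 hi2]
  have hcoef : ((-1 : ℚ)) ^ (i + 1) * (-1 : ℚ) ^ (n - i + 1) = -((-1 : ℚ)) ^ (n + 1) := by
    rw [← pow_add]
    have h : i + 1 + (n - i + 1) = (n + 1) + 1 := by omega
    rw [h, pow_succ]
    ring
  rw [hA, hB, hC, wedge_smul_smul, hcoef,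
    wedge_swap (cor (tup1 n x (n - j + (n - i) + 1) i)) (cor (tup1 n x (n - j) (n - i))),
    smul_neg, neg_smul, neg_neg]

/-- If `cor` is cyclically invariant and satisfies the reversal symmetry in lengths `≤ n`,
then `δcor` of the reversed tuple is `(−1)^{n+1}` times `δcor` of the original tuple. -/
theorem stmt11 [AddCommGroup L] [Module ℚ L] (n : ℕ) (hn : 1 ≤ n)
    (cor : List X → L)
    (hcyc : ∀ (a : X) (l : List X), cor (a :: l) = cor (l ++ [a]))
    (hrev : ∀ l : List X, 1 ≤ l.length → l.length ≤ n →
      cor l.reverse = ((-1 : ℚ)) ^ l.length • cor l)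
    (x : ℕ → X) :
    dcor cor n (fun t => x (n - t)) = ((-1 : ℚ)) ^ (n + 1) • dcor cor n x := by
  have houter := Finset.sum_range_reflect
    (fun j => ∑ i ∈ Finset.Icc 1 (n - 1),
      ((-1 : ℚ)) ^ (n + 1) • wedge (cor (tup1 n x j i)) (cor (tup2 n x j i))) (n + 1)
  simp only [Nat.add_sub_cancel] at houter
  unfold dcor
  calc ∑ j ∈ Finset.range (n + 1), ∑ i ∈ Finset.Icc 1 (n - 1),
        wedge (cor (tup1 n (fun t => x (n - t)) j i)) (cor (tup2 n (fun t => x (n - t)) j i))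
      = ∑ j ∈ Finset.range (n + 1), ∑ i ∈ Finset.Icc 1 (n - 1),
        ((-1 : ℚ)) ^ (n + 1) • wedge (cor (tup1 n x (n - j) (n - i))) (cor (tup2 n x (n - j) (n - i))) := by
        refine Finset.sum_congr rfl fun j hj => Finset.sum_congr rfl fun i hi => ?_
        simp only [Finset.mem_range] at hj
        simp only [Finset.mem_Icc] at hi
        exact termwise n j i hn (by omega) hi.1 hi.2 cor hcyc hrev x
    _ = ∑ j ∈ Finset.range (n + 1), ∑ i ∈ Finset.Icc 1 (n - 1),
        ((-1 : ℚ)) ^ (n + 1) • wedge (cor (tup1 n x (n - j) i)) (cor (tup2 n x (n - j) i)) := by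
        refine Finset.sum_congr rfl fun j hj => ?_
        refine Finset.sum_nbij' (fun i => n - i) (fun i => n - i) ?_ ?_ ?_ ?_ ?_ <;>
          intro a ha <;> simp only [Finset.mem_Icc] at * <;> first | omega | rfl
    _ = ∑ j ∈ Finset.range (n + 1), ∑ i ∈ Finset.Icc 1 (n - 1),
        ((-1 : ℚ)) ^ (n + 1) • wedge (cor (tup1 n x j i)) (cor (tup2 n x j i)) := houter
    _ = ((-1 : ℚ)) ^ (n + 1) • ∑ j ∈ Finset.range (n + 1), ∑ i ∈ Finset.Icc 1 (n - 1),
        wedge (cor (tup1 n x j i)) (cor (tup2 n x j i)) := by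
        rw [Finset.smul_sum]
        exact Finset.sum_congr rfl fun j _ => (Finset.smul_sum).symm
end
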